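/- arXiv:1311.0198 — 6 statements merged into one kernel-verified Lean document; each statement's English description precedes it below -/
import Mathlib

section
/- Sort the bids in descending order of value and the asks in ascending order of value, and let k be the largest integer such that for every i ≤ k the i-th lowest ask's value is at most the i-th highest bid's value. The allocation that matches the i-th highest bid with the i-th lowest ask for i = 1,…,k maximizes social welfare among all feasible allocations. -/
/-- Extract the minimum-value unmatched ask from a list, with a fixed
tie-breaking rule (earlier list positions are preferred). Returns the
minimum together with the remaining list. -/
noncomputable def extractMin : List ℝ → Option (ℝ × List ℝ)
  | [] => none
  | a :: as =>
    match extractMin as with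
    | none => some (a, [])
    | some (m, rest) => if a ≤ m then some (a, as) else some (m, a :: rest)

/-- State of the Best-first (greedy) allocation: the currently unmatched asks,
the matched (ask, bid) pairs in match order, and the unmatched bids. -/
structure BfState where
  unmatchedAsks : List ℝ
  matched : List (ℝ × ℝ)
  unmatchedBids : List ℝ

/-- One step of the Best-first allocation: when bid `b` arrives, match it to the
minimum unmatched ask `a` if `a ≤ b`; otherwise leave `b` unmatched. -/
noncomputable def bfStep (s : BfState) (b : ℝ) : BfState :=
  match extractMin s.unmatchedAsks with
  | some (a, rest) =>
      if a ≤ b then ⟨rest, s.matched ++ [(a, b)], s.unmatchedBids⟩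
      else ⟨s.unmatchedAsks, s.matched, s.unmatchedBids ++ [b]⟩
  | none => ⟨s.unmatchedAsks, s.matched, s.unmatchedBids ++ [b]⟩

/-- Run the Best-first allocation on the bids in arrival order. -/
noncomputable def bfRun (asks bids : List ℝ) : BfState :=
  bids.foldl bfStep ⟨asks, [], []⟩

/-- Insertion into an ascending-sorted list. -/
noncomputable def insertAsc (x : ℝ) : List ℝ → List ℝ
  | [] => [x]
  | y :: ys => if x ≤ y then x :: y :: ys else y :: insertAsc x ys

/-- Sort a list of reals in ascending order. -/
noncomputable def sortAsc (l : List ℝ) : List ℝ := l.foldr insertAsc []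

/-- Sort a list of reals in descending order. -/
noncomputable def sortDesc (l : List ℝ) : List ℝ := (sortAsc l).reverse

/-- Match the i-th element of the first list with the i-th element of the
second, stopping as soon as a pair is not matchable (`a ≤ b` fails). -/
noncomputable def matchPrefix : List ℝ → List ℝ → List (ℝ × ℝ)
  | a :: as, b :: bs => if a ≤ b then (a, b) :: matchPrefix as bs else []
  | _, _ => []

/-- The optimal allocation: match the highest bid with the lowest ask, the
second highest bid with the second lowest ask, and so on, stopping as soon as
a pair is not matchable. -/
noncomputable def optPairs (asks bids : List ℝ) : List (ℝ × ℝ) :=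
  matchPrefix (sortAsc asks) (sortDesc bids)

/-- A feasible allocation: a partial matching (multiset of (ask, bid) pairs)
using each ask and each bid at most once, with `a ≤ b` for every matched pair. -/
def IsFeasible (asks bids : List ℝ) (M : Multiset (ℝ × ℝ)) : Prop :=
  M.map Prod.fst ≤ (asks : Multiset ℝ) ∧
  M.map Prod.snd ≤ (bids : Multiset ℝ) ∧
  ∀ p ∈ M, p.1 ≤ p.2

/-- Social welfare of an allocation: sum of matched bid values plus the sum of
the values of the unmatched asks. -/
noncomputable def welfare (asks : List ℝ) (M : Multiset (ℝ × ℝ)) : ℝ :=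
  (M.map Prod.snd).sum + ((asks : Multiset ℝ) - M.map Prod.fst).sum

/-- Social welfare of the Best-first allocation. -/
noncomputable def bfWelfare (asks bids : List ℝ) : ℝ :=
  ((bfRun asks bids).matched.map Prod.snd).sum + (bfRun asks bids).unmatchedAsks.sum

/-- Maximum social welfare over all feasible allocations. -/
noncomputable def OptW (asks bids : List ℝ) : ℝ :=
  sSup {w : ℝ | ∃ M : Multiset (ℝ × ℝ), IsFeasible asks bids M ∧ w = welfare asks M}

/-! The welfare of a feasible allocation `M` is the total ask value plus the gain `∑ (b - a)`
over its pairs. If `M` has `m` pairs, its bids sum to at most the `m` highest bids and its asks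
to at least the `m` lowest asks, so its gain is at most `∑_{i<m} (B i - A i)` for the sorted
lists `A` (ascending) and `B` (descending). These differences decrease in `i`, so that partial
sum is at most the sum of the nonnegative ones, which is the gain of `optPairs`. -/

namespace Multiset

variable {α : Type*} [AddCommMonoid α] [LinearOrder α] [IsOrderedAddMonoid α]

theorem sum_le_sum_take_of_le {l : List α} (hl : l.Pairwise (· ≥ ·)) {s : Multiset α}
    (hs : s ≤ l) : s.sum ≤ (l.take (card s)).sum := by
  induction l generalizing s with
  | nil => simp [le_zero.mp hs]
  | cons b l ih =>
    rw [← cons_coe] at hs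
    obtain rfl | ⟨x, hxs, hxb, hx⟩ : s = 0 ∨ ∃ x ∈ s, x ≤ b ∧ s.erase x ≤ l := by
      by_cases hb : b ∈ s
      · exact .inr ⟨b, hb, le_rfl, erase_le_iff_le_cons.mpr hs⟩
      · rw [le_cons_of_notMem hb] at hs
        refine (empty_or_exists_mem s).imp id fun ⟨x, hx⟩ => ⟨x, hx, ?_, (erase_le x s).trans hs⟩
        exact List.rel_of_pairwise_cons hl (mem_of_le hs hx)
    · simp
    calc s.sum = x + (s.erase x).sum := by rw [← sum_cons, cons_erase hxs]
      _ ≤ b + (l.take (card (s.erase x))).sum := add_le_add hxb (ih hl.of_cons hx)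
      _ = ((b :: l).take (card s)).sum := by rw [← card_erase_add_one hxs]; simp

theorem sum_take_le_sum_of_le {l : List α} (hl : l.Pairwise (· ≤ ·)) {s : Multiset α}
    (hs : s ≤ l) : (l.take (card s)).sum ≤ s.sum :=
  sum_le_sum_take_of_le (α := αᵒᵈ) hl hs

end Multiset

theorem List.sum_take_le_sum_take_of_le_of_le {α : Type*} [AddCommMonoid α] [Preorder α]
    [IsOrderedAddMonoid α] {l l' : List α} {c : α} (hl : ∀ x ∈ l, x ≤ c) (hl' : ∀ y ∈ l', c ≤ y)
    {n : ℕ} (hn : n ≤ l.length) (hn' : n ≤ l'.length) : (l.take n).sum ≤ (l'.take n).sum :=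
  calc (l.take n).sum ≤ (l.take n).length • c :=
        sum_le_card_nsmul _ c fun x hx => hl x (mem_of_mem_take hx)
    _ = (l'.take n).length • c := by simp [hn, hn']
    _ ≤ (l'.take n).sum := card_nsmul_le_sum _ c fun y hy => hl' y (mem_of_mem_take hy)

theorem sortAsc_eq_insertionSort (l : List ℝ) : sortAsc l = l.insertionSort (· ≤ ·) := by
  have insertAsc_eq (x : ℝ) (l : List ℝ) : insertAsc x l = l.orderedInsert (· ≤ ·) x := by
    induction l with
    | nil => rfl
    | cons y ys ih => simp [insertAsc, ih]
  rw [sortAsc, show insertAsc = List.orderedInsert (· ≤ ·) from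
    funext fun x => funext (insertAsc_eq x)]
  rfl

theorem sortAsc_pairwise (l : List ℝ) : (sortAsc l).Pairwise (· ≤ ·) := by
  rw [sortAsc_eq_insertionSort]
  exact List.pairwise_insertionSort _ l

theorem sortDesc_pairwise (l : List ℝ) : (sortDesc l).Pairwise (· ≥ ·) :=
  List.pairwise_reverse.mpr (sortAsc_pairwise l)

@[simp]
theorem coe_sortAsc (l : List ℝ) : (sortAsc l : Multiset ℝ) = l := by
  rw [sortAsc_eq_insertionSort, Multiset.coe_eq_coe]
  exact List.perm_insertionSort _ l

@[simp]
theorem coe_sortDesc (l : List ℝ) : (sortDesc l : Multiset ℝ) = l := by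
  rw [sortDesc, Multiset.coe_reverse, coe_sortAsc]

theorem matchPrefix_map_fst_prefix (A B : List ℝ) : (matchPrefix A B).map Prod.fst <+: A := by
  fun_induction matchPrefix A B <;> simp_all

theorem matchPrefix_map_snd_prefix (A B : List ℝ) : (matchPrefix A B).map Prod.snd <+: B := by
  fun_induction matchPrefix A B <;> simp_all

theorem le_of_mem_matchPrefix {A B : List ℝ} {p : ℝ × ℝ} (hp : p ∈ matchPrefix A B) :
    p.1 ≤ p.2 := by
  fun_induction matchPrefix A B <;> aesop

theorem sum_map_fst_le_sum_map_snd_matchPrefix (A B : List ℝ) :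
    ((matchPrefix A B).map Prod.fst).sum ≤ ((matchPrefix A B).map Prod.snd).sum :=
  List.sum_le_sum fun _ hp => le_of_mem_matchPrefix hp

/-- Up to the first unmatchable pair both sides agree term by term; from there on every bid is
at most that pair's bid `b` and every ask at least `b`, so the remaining differences are
nonpositive. -/
theorem sum_take_sub_sum_take_le_matchPrefix {A B : List ℝ} (hA : A.Pairwise (· ≤ ·))
    (hB : B.Pairwise (· ≥ ·)) {m : ℕ} (hmA : m ≤ A.length) (hmB : m ≤ B.length) :
    (B.take m).sum - (A.take m).sum ≤
      ((matchPrefix A B).map Prod.snd).sum - ((matchPrefix A B).map Prod.fst).sum := by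
  fun_induction matchPrefix A B generalizing m with
  | case1 a A b B hab ih =>
    cases m with
    | zero =>
      simpa [matchPrefix, hab] using sum_map_fst_le_sum_map_snd_matchPrefix (a :: A) (b :: B)
    | succ m =>
      have := ih hA.of_cons hB.of_cons (by simpa using hmA) (by simpa using hmB)
      simp only [List.take_succ_cons, List.sum_cons, List.map_cons]
      linarith
  | case2 a A b B hab =>
    have hba : b ≤ a := (not_le.mp hab).le
    have hsep := List.sum_take_le_sum_take_of_le_of_le (c := b)
      (List.forall_mem_cons.mpr ⟨le_rfl, fun _ hx => List.rel_of_pairwise_cons hB hx⟩)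
      (List.forall_mem_cons.mpr ⟨hba, fun _ hy => hba.trans (List.rel_of_pairwise_cons hA hy)⟩)
      hmB hmA
    simpa using hsep
  | case3 A B h =>
    obtain rfl : m = 0 := by
      cases A <;> cases B <;> first | exact (h _ _ _ _ rfl rfl).elim | simp_all
    simp

theorem welfare_eq_of_le {asks : List ℝ} {M : Multiset (ℝ × ℝ)} (h : M.map Prod.fst ≤ asks) :
    welfare asks M = (asks : Multiset ℝ).sum + ((M.map Prod.snd).sum - (M.map Prod.fst).sum) := by
  have hsum := congrArg Multiset.sum (tsub_add_cancel_of_le h)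
  rw [Multiset.sum_add] at hsum
  rw [welfare]
  linarith

theorem isFeasible_optPairs (asks bids : List ℝ) :
    IsFeasible asks bids ↑(optPairs asks bids) := by
  refine ⟨?_, ?_, fun p hp => le_of_mem_matchPrefix hp⟩
  · rw [Multiset.map_coe, ← coe_sortAsc asks, Multiset.coe_le]
    exact (matchPrefix_map_fst_prefix _ _).sublist.subperm
  · rw [Multiset.map_coe, ← coe_sortDesc bids, Multiset.coe_le]
    exact (matchPrefix_map_snd_prefix _ _).sublist.subperm

theorem welfare_le_welfare_optPairs {asks bids : List ℝ} {M : Multiset (ℝ × ℝ)}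
    (hM : IsFeasible asks bids M) : welfare asks M ≤ welfare asks ↑(optPairs asks bids) := by
  obtain ⟨hfst, hsnd, -⟩ := hM
  rw [welfare_eq_of_le hfst, welfare_eq_of_le (isFeasible_optPairs asks bids).1]
  rw [← coe_sortAsc asks] at hfst
  rw [← coe_sortDesc bids] at hsnd
  set m := Multiset.card M
  have hcard_fst := Multiset.card_le_card hfst
  have hcard_snd := Multiset.card_le_card hsnd
  simp only [Multiset.card_map, Multiset.coe_card] at hcard_fst hcard_snd
  apply add_le_add_right
  calc (M.map Prod.snd).sum - (M.map Prod.fst).sum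
      ≤ ((sortDesc bids).take m).sum - ((sortAsc asks).take m).sum := by
        gcongr
        · simpa using Multiset.sum_le_sum_take_of_le (sortDesc_pairwise bids) hsnd
        · simpa using Multiset.sum_take_le_sum_of_le (sortAsc_pairwise asks) hfst
    _ ≤ _ := sum_take_sub_sum_take_le_matchPrefix (sortAsc_pairwise asks) (sortDesc_pairwise bids)
        hcard_fst hcard_snd
    _ = _ := by simp [optPairs]

theorem optPairs_maximizes_welfare_general (asks bids : List ℝ) :
    IsFeasible asks bids ↑(optPairs asks bids) ∧
    ∀ M : Multiset (ℝ × ℝ), IsFeasible asks bids M →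
      welfare asks M ≤ welfare asks ↑(optPairs asks bids) :=
  ⟨isFeasible_optPairs asks bids, fun _ => welfare_le_welfare_optPairs⟩

/-- The allocation matching the i-th highest bid with the
i-th lowest ask, for i = 1,…,k (k the largest integer such that each such pair
is matchable), is feasible and maximizes social welfare among all feasible
allocations. -/
theorem optPairs_maximizes_welfare (asks bids : List ℝ)
    (ha : ∀ a ∈ asks, 0 ≤ a) (hb : ∀ b ∈ bids, 0 ≤ b) :
    IsFeasible asks bids ↑(optPairs asks bids) ∧
    ∀ M : Multiset (ℝ × ℝ), IsFeasible asks bids M →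
      welfare asks M ≤ welfare asks ↑(optPairs asks bids) :=
  optPairs_maximizes_welfare_general asks bids
end

section
/- If the number of bids is at most the number of asks (demand does not exceed supply), then the Best-first allocation is 2-competitive: its social welfare is at least half of the maximum social welfare over all feasible allocations, i.e., W(Bf) ≥ W(Opt)/2. -/
/-!
Let `F` be the pairs Best-first matched, `Uₐ` the asks it left unmatched and `U_b` the bids it
rejected, so that `W(Bf) = Σ F_b + Σ Uₐ`. A bid is rejected only when it is below every ask still
unmatched, and the pool of unmatched asks only shrinks, so every rejected bid is below every
finally unmatched ask; as demand does not exceed supply, `|U_b| ≤ |Uₐ|`, hence `Σ U_b ≤ Σ Uₐ`.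
With values nonnegative, any feasible allocation has welfare at most `Σ asks + Σ bids`, and
`Σ asks + Σ bids = (Σ Fₐ + Σ Uₐ) + (Σ F_b + Σ U_b) ≤ 2 (Σ F_b + Σ Uₐ)` since `Fₐ ≤ F_b` pairwise.
-/

theorem Multiset.sum_le_sum_of_le {M : Type*} [AddCommMonoid M] [PartialOrder M]
    [IsOrderedAddMonoid M] {s t : Multiset M} (hst : s ≤ t) (ht : ∀ x ∈ t, 0 ≤ x) :
    s.sum ≤ t.sum := by
  obtain ⟨u, rfl⟩ := Multiset.le_iff_exists_add.mp hst
  rw [Multiset.sum_add]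
  exact le_add_of_nonneg_right (Multiset.sum_nonneg fun x hx => ht x (by simp [hx]))

theorem List.sum_le_sum_of_forall_le_of_length_le {M : Type*} [AddCommMonoid M]
    [PartialOrder M] [IsOrderedAddMonoid M] :
    ∀ {l₁ l₂ : List M}, (∀ y ∈ l₂, 0 ≤ y) → (∀ x ∈ l₁, ∀ y ∈ l₂, x ≤ y) →
      l₁.length ≤ l₂.length → l₁.sum ≤ l₂.sum
  | [], _, h₀, _, _ => by simpa using List.sum_nonneg h₀
  | _ :: _, [], _, _, hlen => by simp at hlen
  | x :: l₁, y :: l₂, h₀, hle, hlen => by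
    simp only [List.sum_cons]
    exact add_le_add (hle x (by simp) y (by simp))
      (sum_le_sum_of_forall_le_of_length_le (fun z hz => h₀ z (by simp [hz]))
        (fun a ha b hb => hle a (by simp [ha]) b (by simp [hb])) (by simpa using hlen))

theorem welfare_le_sum_add_sum {asks bids : List ℝ} {M : Multiset (ℝ × ℝ)}
    (ha : ∀ a ∈ asks, 0 ≤ a) (hb : ∀ b ∈ bids, 0 ≤ b)
    (hM : M.map Prod.snd ≤ (bids : Multiset ℝ)) :
    welfare asks M ≤ asks.sum + bids.sum := by
  have hbids := Multiset.sum_le_sum_of_le hM (by simpa using hb)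
  have hasks := Multiset.sum_le_sum_of_le
    (tsub_le_self : (asks : Multiset ℝ) - M.map Prod.fst ≤ asks) (by simpa using ha)
  rw [Multiset.sum_coe] at hbids hasks
  unfold welfare
  linarith

theorem extractMin_eq_none {l : List ℝ} (h : extractMin l = none) : l = [] := by
  cases l with
  | nil => rfl
  | cons a as =>
    rw [extractMin] at h
    split at h
    · simp at h
    · split_ifs at h

theorem extractMin_eq_some {l : List ℝ} {m : ℝ} {rest : List ℝ}
    (h : extractMin l = some (m, rest)) :
    m ::ₘ (rest : Multiset ℝ) = l ∧ ∀ x ∈ l, m ≤ x := by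
  induction l generalizing m rest with
  | nil => simp [extractMin] at h
  | cons a as ih =>
    rw [extractMin] at h
    split at h
    next hnone =>
      obtain rfl := extractMin_eq_none hnone
      simp only [Option.some.injEq, Prod.mk.injEq] at h
      obtain ⟨rfl, rfl⟩ := h
      simp
    next m' rest' hm' =>
      obtain ⟨hcons, hmin⟩ := ih hm'
      split_ifs at h with ham <;> simp only [Option.some.injEq, Prod.mk.injEq] at h <;>
        obtain ⟨rfl, rfl⟩ := h
      · exact ⟨rfl, by simpa using fun x hx => ham.trans (hmin x hx)⟩
      · refine ⟨by rw [← Multiset.cons_coe, Multiset.cons_swap, hcons]; rfl, ?_⟩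
        simpa using ⟨(not_le.mp ham).le, hmin⟩

structure BfState.Invariant (A B : Multiset ℝ) (s : BfState) : Prop where
  asks_eq : ((s.matched.map Prod.fst : List ℝ) : Multiset ℝ) + s.unmatchedAsks = A
  bids_eq : ((s.matched.map Prod.snd : List ℝ) : Multiset ℝ) + s.unmatchedBids = B
  matched_le : ∀ p ∈ s.matched, p.1 ≤ p.2
  unmatchedBid_le : ∀ b ∈ s.unmatchedBids, ∀ a ∈ s.unmatchedAsks, b ≤ a

namespace BfState.Invariant

variable {A B : Multiset ℝ} {s : BfState} {b : ℝ}

theorem reject (h : s.Invariant A B) (hb : ∀ a ∈ s.unmatchedAsks, b ≤ a) :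
    Invariant A (b ::ₘ B) ⟨s.unmatchedAsks, s.matched, s.unmatchedBids ++ [b]⟩ where
  asks_eq := h.asks_eq
  bids_eq := by
    simp [← h.bids_eq, ← Multiset.coe_add, ← Multiset.singleton_add, add_comm, add_left_comm,
      add_assoc]
  matched_le := h.matched_le
  unmatchedBid_le := by
    simpa [or_imp, forall_and] using ⟨h.unmatchedBid_le, hb⟩

theorem accept {a : ℝ} {rest : List ℝ} (h : s.Invariant A B)
    (hrest : a ::ₘ (rest : Multiset ℝ) = s.unmatchedAsks) (hab : a ≤ b) :
    Invariant A (b ::ₘ B) ⟨rest, s.matched ++ [(a, b)], s.unmatchedBids⟩ where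
  asks_eq := by
    simp [← h.asks_eq, ← hrest, ← Multiset.coe_add, ← Multiset.singleton_add, add_assoc]
  bids_eq := by
    simp [← h.bids_eq, ← Multiset.coe_add, ← Multiset.singleton_add, add_comm, add_left_comm]
  matched_le := by
    simp only [List.mem_append, List.mem_singleton]
    rintro p (hp | rfl)
    exacts [h.matched_le p hp, hab]
  unmatchedBid_le b' hb' a' ha' := h.unmatchedBid_le b' hb' a' <| by
    rw [← Multiset.mem_coe, ← hrest]
    exact Multiset.mem_cons_of_mem ha'

theorem bfStep (h : s.Invariant A B) (b : ℝ) : (bfStep s b).Invariant A (b ::ₘ B) := by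
  unfold _root_.bfStep
  split
  next a rest hm =>
    obtain ⟨hrest, hmin⟩ := extractMin_eq_some hm
    split_ifs with hab
    · exact h.accept hrest hab
    · exact h.reject fun x hx => (not_le.mp hab).le.trans (hmin x hx)
  next hm => exact h.reject (by simp [extractMin_eq_none hm])

theorem foldl_bfStep (h : s.Invariant A B) (bids : List ℝ) :
    (bids.foldl _root_.bfStep s).Invariant A (B + bids) := by
  induction bids generalizing s B with
  | nil => simpa using h
  | cons b bids ih => simpa [← Multiset.cons_coe, Multiset.add_cons] using ih (h.bfStep b)

end BfState.Invariant

theorem bfRun_invariant (asks bids : List ℝ) : (bfRun asks bids).Invariant asks bids := by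
  have hinit : BfState.Invariant asks 0 ⟨asks, [], []⟩ := ⟨by simp, by simp, by simp, by simp⟩
  simpa [bfRun] using hinit.foldl_bfStep bids

theorem sum_add_sum_le_two_mul_bfWelfare {asks bids : List ℝ} (ha : ∀ a ∈ asks, 0 ≤ a)
    (hlen : bids.length ≤ asks.length) :
    asks.sum + bids.sum ≤ 2 * bfWelfare asks bids := by
  obtain ⟨hasks, hbids, hmatched, hrejected⟩ := bfRun_invariant asks bids
  set F := bfRun asks bids
  have hFa : (F.matched.map Prod.fst).sum ≤ (F.matched.map Prod.snd).sum :=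
    List.sum_le_sum hmatched
  have hU : F.unmatchedBids.sum ≤ F.unmatchedAsks.sum := by
    have hcard := congrArg Multiset.card hasks
    have hcard' := congrArg Multiset.card hbids
    simp only [Multiset.card_add, Multiset.coe_card, List.length_map] at hcard hcard'
    refine List.sum_le_sum_of_forall_le_of_length_le (fun a ha' => ha a ?_) hrejected (by omega)
    rw [← Multiset.mem_coe, ← hasks]
    exact Multiset.mem_add.mpr (Or.inr (Multiset.mem_coe.mpr ha'))
  have hsa := congrArg Multiset.sum hasks
  have hsb := congrArg Multiset.sum hbids
  simp only [Multiset.sum_add, Multiset.sum_coe] at hsa hsb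
  unfold bfWelfare
  linarith

/-- If the number of bids is at most the number of asks, then
the Best-first allocation is 2-competitive: `W(Bf) ≥ W(Opt)/2`. -/
theorem bf_two_competitive (asks bids : List ℝ)
    (ha : ∀ a ∈ asks, 0 ≤ a) (hb : ∀ b ∈ bids, 0 ≤ b)
    (hlen : bids.length ≤ asks.length) :
    OptW asks bids / 2 ≤ bfWelfare asks bids := by
  have hbound := sum_add_sum_le_two_mul_bfWelfare ha hlen
  rw [div_le_iff₀ two_pos, mul_comm]
  refine Real.sSup_le ?_ ((add_nonneg (List.sum_nonneg ha) (List.sum_nonneg hb)).trans hbound)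
  rintro _ ⟨M, hM, rfl⟩
  exact (welfare_le_sum_add_sum ha hb hM.2.1).trans hbound
end

section
/- After the Best-first allocation has processed all bids, every ask left unmatched has value strictly greater than the value of every bid left unmatched. -/
/-! A bid is left unmatched only when it lies below the current minimum ask, and afterwards
asks are only ever removed, so "every unmatched bid lies below every unmatched ask" is an
invariant of the greedy step. -/

theorem extractMin_eq_none_iff {l : List ℝ} : extractMin l = none ↔ l = [] := by
  cases l with
  | nil => simp [extractMin]
  | cons a as =>
    simp only [extractMin, reduceCtorEq, iff_false]
    split
    · simp
    · split <;> simp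

theorem extractMin_spec {l : List ℝ} {m : ℝ} {rest : List ℝ}
    (h : extractMin l = some (m, rest)) : (m :: rest).Perm l ∧ ∀ x ∈ l, m ≤ x := by
  induction l generalizing m rest with
  | nil => simp [extractMin] at h
  | cons a as ih =>
    rw [extractMin] at h
    rcases hmin : extractMin as with _ | ⟨m', rest'⟩ <;> simp only [hmin] at h
    · obtain ⟨rfl, rfl⟩ : a = m ∧ [] = rest := by simpa using h
      simp [extractMin_eq_none_iff.mp hmin]
    · obtain ⟨hperm, hle⟩ := ih hmin
      split_ifs at h with ham
      · obtain ⟨rfl, rfl⟩ : a = m ∧ as = rest := by simpa using h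
        exact ⟨.refl _, by simpa using fun x hx => ham.trans (hle x hx)⟩
      · obtain ⟨rfl, rfl⟩ : m' = m ∧ a :: rest' = rest := by simpa using h
        refine ⟨(List.Perm.swap a m' rest').trans (hperm.cons a), ?_⟩
        simpa using ⟨(not_le.mp ham).le, hle⟩

def BfState.Separated (s : BfState) : Prop :=
  ∀ a ∈ s.unmatchedAsks, ∀ b ∈ s.unmatchedBids, b < a

theorem bfStep_separated {s : BfState} (hs : s.Separated) (b : ℝ) :
    (bfStep s b).Separated := by
  unfold bfStep
  rcases hmin : extractMin s.unmatchedAsks with _ | ⟨m, rest⟩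
  · simp [BfState.Separated, extractMin_eq_none_iff.mp hmin]
  · obtain ⟨hperm, hle⟩ := extractMin_spec hmin
    dsimp only
    split_ifs with hmb
    · exact fun a ha => hs a (hperm.subset (List.mem_cons_of_mem m ha))
    · intro a ha c hc
      rcases List.mem_append.mp hc with hc | hc
      · exact hs a ha c hc
      · rw [List.mem_singleton.mp hc]
        exact (not_le.mp hmb).trans_le (hle a ha)

theorem foldl_bfStep_separated {s : BfState} (hs : s.Separated) (bids : List ℝ) :
    (bids.foldl bfStep s).Separated := by
  induction bids generalizing s with
  | nil => exact hs
  | cons b bids ih => exact ih (bfStep_separated hs b)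

/-- After the Best-first allocation has processed all bids,
every unmatched ask has value strictly greater than every unmatched bid. -/
theorem bf_unmatched_asks_gt_unmatched_bids (asks bids : List ℝ) :
    ∀ a ∈ (bfRun asks bids).unmatchedAsks, ∀ b ∈ (bfRun asks bids).unmatchedBids,
      b < a :=
  foldl_bfStep_separated (s := ⟨asks, [], []⟩) (by simp [BfState.Separated]) bids
end

section
/- In M_greedy, truthful valuation reporting is optimal for every buyer: fix the asks, the other bids and the arrival order, and consider a buyer with true value v arriving at a fixed position p; for every reported value v′ ≥ 0, the buyer's utility when reporting v (namely v minus the value of the minimum unmatched ask at his arrival if that ask's value is at most v, and 0 otherwise) is at least his utility when reporting v′ (namely v minus that same minimum unmatched ask's value if it is at most v′, and 0 otherwise). -/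
/-- Utility of a buyer with true value `trueV` who reports `report` and whose
bid arrives right after the bids `before` have been processed: he is matched
to the minimum unmatched ask `a` at his arrival iff `a ≤ report`, in which
case he pays `a`; otherwise his utility is 0. -/
noncomputable def buyerUtil (asks before : List ℝ) (report trueV : ℝ) : ℝ :=
  match extractMin (bfRun asks before).unmatchedAsks with
  | some (a, _) => if a ≤ report then trueV - a else 0
  | none => 0

/-- A bid of value `r` arriving right after the bids `before` is matched by
the Best-first allocation. -/
def bfMatchedAt (asks before : List ℝ) (r : ℝ) : Prop :=
  match extractMin (bfRun asks before).unmatchedAsks with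
  | some (a, _) => a ≤ r
  | none => False

/-- The report only decides whether the buyer trades, at a price `a` fixed before he arrives;
reporting `v` trades exactly when `v - a ≥ 0`. -/
theorem ite_le_sub_le_ite_le_sub {α : Type*} [AddCommGroup α] [LinearOrder α]
    [IsOrderedAddMonoid α] (a r v : α) :
    (if a ≤ r then v - a else 0) ≤ if a ≤ v then v - a else 0 := by
  split_ifs with har hav hav
  · exact le_rfl
  · exact sub_nonpos.2 (le_of_not_ge hav)
  · exact sub_nonneg.2 hav
  · exact le_rfl

theorem buyer_truthful_valuation_general (asks before : List ℝ)
    (v v' : ℝ) :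
    buyerUtil asks before v' v ≤ buyerUtil asks before v v := by
  unfold buyerUtil
  split
  · exact ite_le_sub_le_ite_le_sub _ _ _
  · exact le_rfl

/-- In `M_greedy`, truthful valuation reporting is optimal for
every buyer: fixing the asks and the bids `before` arriving before him, for
every reported value `v' ≥ 0` the buyer's utility when reporting his true
value `v` is at least his utility when reporting `v'`. -/
theorem buyer_truthful_valuation (asks before : List ℝ)
    (ha : ∀ a ∈ asks, 0 ≤ a) (hbef : ∀ b ∈ before, 0 ≤ b)
    (v v' : ℝ) (hv : 0 ≤ v) (hv' : 0 ≤ v') :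
    buyerUtil asks before v' v ≤ buyerUtil asks before v v :=
  buyer_truthful_valuation_general asks before v v'
end

section
/- In the Best-first allocation, a matched buyer's outcome is monotone and independent of his report among winning reports: fixing the asks, the other bids and the arrival order, if a bid of value v placed at position p is matched, then a bid of any value v′ ≥ v placed at the same position is also matched, and it is matched to an ask of the same value (the minimum unmatched ask at that arrival, which does not depend on the bid's own reported value), hence with the same payment in M_greedy. -/
/-- The value of the ask matched to a bid of value `r` arriving right after the
bids `before` (`none` if the bid is left unmatched); this is also the buyer's
payment in `M_greedy`. -/
noncomputable def bfMatchedAskAt (asks before : List ℝ) (r : ℝ) : Option ℝ :=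
  match extractMin (bfRun asks before).unmatchedAsks with
  | some (a, _) => if a ≤ r then some a else none
  | none => none

theorem bf_buyer_monotone_general (asks before : List ℝ)
    (v v' : ℝ) (hvv : v ≤ v')
    (hmatched : (bfMatchedAskAt asks before v).isSome) :
    (bfMatchedAskAt asks before v').isSome ∧
      bfMatchedAskAt asks before v' = bfMatchedAskAt asks before v := by
  unfold bfMatchedAskAt at *
  rcases h : extractMin (bfRun asks before).unmatchedAsks with _ | ⟨a, _⟩ <;>
    simp only [h] at hmatched ⊢
  · simp at hmatched
  · have hav : a ≤ v := by simpa using hmatched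
    simp [hav, hav.trans hvv]

/-- In the Best-first allocation, a matched buyer's outcome
is monotone and report-independent among winning reports: if a bid of value
`v` placed at a position is matched, then a bid of any value `v' ≥ v` placed
at the same position is also matched, to an ask of the same value, hence with
the same payment in `M_greedy`. -/
theorem bf_buyer_monotone (asks before : List ℝ)
    (ha : ∀ x ∈ asks, 0 ≤ x) (hbef : ∀ x ∈ before, 0 ≤ x)
    (v v' : ℝ) (hvv : v ≤ v')
    (hmatched : (bfMatchedAskAt asks before v).isSome) :
    (bfMatchedAskAt asks before v').isSome ∧
      bfMatchedAskAt asks before v' = bfMatchedAskAt asks before v :=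
  bf_buyer_monotone_general asks before v v' hvv hmatched
end

section
/- M_greedy is individually rational: under truthful reporting, every matched buyer pays at most his valuation and every matched seller receives a payment of at least her valuation; hence every trader's utility is nonnegative. -/
/-- An ask: a (value, seller id) pair. -/
abbrev Ask := ℝ × ℕ

/-- Extract the minimum-value unmatched ask, with a fixed tie-breaking rule
(earlier list positions are preferred). -/
noncomputable def extractMinA : List Ask → Option (Ask × List Ask)
  | [] => none
  | a :: as =>
    match extractMinA as with
    | none => some (a, [])
    | some (m, rest) => if a.1 ≤ m.1 then some (a, as) else some (m, a :: rest)

/-- State of the Best-first (greedy) allocation with identified asks. -/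
structure BfStateA where
  unmatchedAsks : List Ask
  matched : List (Ask × ℝ)
  unmatchedBids : List ℝ

/-- One step of the Best-first allocation: when bid `b` arrives, match it to
the minimum-value unmatched ask `a` if `a.1 ≤ b`; otherwise `b` stays unmatched. -/
noncomputable def bfStepA (s : BfStateA) (b : ℝ) : BfStateA :=
  match extractMinA s.unmatchedAsks with
  | some (a, rest) =>
      if a.1 ≤ b then ⟨rest, s.matched ++ [(a, b)], s.unmatchedBids⟩
      else ⟨s.unmatchedAsks, s.matched, s.unmatchedBids ++ [b]⟩
  | none => ⟨s.unmatchedAsks, s.matched, s.unmatchedBids ++ [b]⟩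

/-- Run the Best-first allocation on the bids in arrival order. -/
noncomputable def bfRunA (asks : List Ask) (bids : List ℝ) : BfStateA :=
  bids.foldl bfStepA ⟨asks, [], []⟩

/-- The ask of seller `id` is matched. -/
def askMatched (st : BfStateA) (id : ℕ) : Prop := ∃ p ∈ st.matched, p.1.2 = id

/-- Highest value among the unmatched bids (0 if there is none). -/
noncomputable def maxBid (l : List ℝ) : ℝ := l.foldr max 0

/-- The `j`-th matched pair is reachable from the last matched pair:
for every `j ≤ m < last`, the `(m+1)`-st matched ask and the `m`-th matched
bid are matchable. -/
def ReachableFromLast (m : List (Ask × ℝ)) (j : ℕ) : Prop :=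
  ∀ i, j ≤ i → i + 1 < m.length → (m.getD (i + 1) default).1.1 ≤ (m.getD i default).2

open scoped Classical in
/-- Payment of the seller whose pair is the `j`-th matched pair:
`min(v(ā_min), max(v(b_last), v(b̄_max)))` if her pair is reachable from the
last matched pair, and `max(v(a_last), v(b̄_max))` otherwise (`v(ā_min) = +∞`
if there is no unmatched ask, handled by dropping the `min`;
`v(b̄_max) = 0` if there is no unmatched bid). -/
noncomputable def sellerPayAt (st : BfStateA) (j : ℕ) : ℝ :=
  let m := st.matched
  let blast : ℝ := ((m.getLast?).map Prod.snd).getD 0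
  let alast : ℝ := ((m.getLast?).map (fun p => p.1.1)).getD 0
  let bmax : ℝ := maxBid st.unmatchedBids
  if ReachableFromLast m j then
    match extractMinA st.unmatchedAsks with
    | some (amin, _) => min amin.1 (max blast bmax)
    | none => max blast bmax
  else max alast bmax

/-- Payment received by seller `id` (0 if her ask is unmatched). -/
noncomputable def sellerPay (st : BfStateA) (id : ℕ) : ℝ :=
  match st.matched.findIdx? (fun p => p.1.2 == id) with
  | some j => sellerPayAt st j
  | none => 0

open scoped Classical in
/-- Utility of seller `id` with true value `trueV` in `M_greedy`. -/
noncomputable def sellerUtil (asks : List Ask) (bids : List ℝ) (id : ℕ) (trueV : ℝ) : ℝ :=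
  let st := bfRunA asks bids
  if askMatched st id then sellerPay st id - trueV else 0

/-- Insert an ask at a given position of the ask list. -/
def insertAskAt (l : List Ask) (pos : ℕ) (x : Ask) : List Ask :=
  l.take pos ++ x :: l.drop pos


/-!
Best-first only matches a bid with an ask of at most its value, so buyers pay at most their
valuation. Since it always takes the cheapest unmatched ask, every matched ask is at most every
still unmatched ask, and matched asks come in nondecreasing order, so each is at most
`a_last ≤ b_last`. Every term of the seller payment rule (`ā_min`, `b_last`, `a_last`) therefore
dominates every matched ask.
-/

lemma eq_nil_of_extractMinA_eq_none : ∀ {l : List Ask}, extractMinA l = none → l = []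
  | [], _ => rfl
  | a :: as, h => by
    unfold extractMinA at h
    split at h
    · cases h
    · split_ifs at h

lemma extractMinA_perm : ∀ {l : List Ask} {m : Ask} {rest : List Ask},
    extractMinA l = some (m, rest) → l.Perm (m :: rest)
  | [], _, _, h => by simp [extractMinA] at h
  | a :: as, m, rest, h => by
    unfold extractMinA at h
    rcases hm : extractMinA as with _ | ⟨m', rest'⟩
    · obtain rfl := eq_nil_of_extractMinA_eq_none hm
      simp_all
    · rw [hm] at h
      dsimp only at h
      split_ifs at h <;> obtain ⟨rfl, rfl⟩ := Prod.mk.inj (Option.some_inj.mp h)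
      · rfl
      · exact ((extractMinA_perm hm).cons a).trans (List.Perm.swap _ _ _)

lemma extractMinA_min : ∀ {l : List Ask} {m : Ask} {rest : List Ask},
    extractMinA l = some (m, rest) → ∀ q ∈ rest, m.1 ≤ q.1
  | [], _, _, h => by simp [extractMinA] at h
  | a :: as, m, rest, h => by
    unfold extractMinA at h
    rcases hm : extractMinA as with _ | ⟨m', rest'⟩
    · rw [hm] at h
      obtain ⟨rfl, rfl⟩ := Prod.mk.inj (Option.some_inj.mp h)
      simp
    · rw [hm] at h
      dsimp only at h
      split_ifs at h with hle <;> obtain ⟨rfl, rfl⟩ := Prod.mk.inj (Option.some_inj.mp h)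
      · intro q hq
        rcases List.mem_cons.mp ((extractMinA_perm hm).mem_iff.mp hq) with rfl | hq
        · exact hle
        · exact hle.trans (extractMinA_min hm q hq)
      · rintro q (_ | ⟨_, hq⟩)
        · exact (not_le.mp hle).le
        · exact extractMinA_min hm q hq

structure GreedyInvariant (s : BfStateA) : Prop where
  ask_le_bid : ∀ p ∈ s.matched, p.1.1 ≤ p.2
  ask_le_unmatched : ∀ p ∈ s.matched, ∀ q ∈ s.unmatchedAsks, p.1.1 ≤ q.1
  ask_le_last : ∀ p ∈ s.matched, ∀ q, s.matched.getLast? = some q → p.1.1 ≤ q.1.1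

lemma GreedyInvariant.bfStepA {s : BfStateA} (h : GreedyInvariant s) (b : ℝ) :
    GreedyInvariant (bfStepA s b) := by
  unfold _root_.bfStepA
  rcases hm : extractMinA s.unmatchedAsks with _ | ⟨a, rest⟩
  · exact ⟨h.1, h.2, h.3⟩
  dsimp only
  split_ifs with hab
  · have hperm := extractMinA_perm hm
    have ha_mem : a ∈ s.unmatchedAsks := hperm.mem_iff.mpr List.mem_cons_self
    have hrest_mem : ∀ q ∈ rest, q ∈ s.unmatchedAsks := fun q hq =>
      hperm.mem_iff.mpr (List.mem_cons_of_mem a hq)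
    refine ⟨?_, ?_, ?_⟩ <;> simp only [List.mem_append, List.mem_singleton, List.getLast?_concat,
      Option.some_inj]
    · rintro p (hp | rfl)
      exacts [h.ask_le_bid p hp, hab]
    · rintro p (hp | rfl) q hq
      exacts [h.ask_le_unmatched p hp q (hrest_mem q hq), extractMinA_min hm q hq]
    · rintro p (hp | rfl) q rfl
      exacts [h.ask_le_unmatched p hp a ha_mem, le_rfl]
  · exact ⟨h.1, h.2, h.3⟩

lemma GreedyInvariant.bfRunA (asks : List Ask) (bids : List ℝ) :
    GreedyInvariant (bfRunA asks bids) :=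
  bids.foldlRecOn _root_.bfStepA ⟨by simp, by simp, by simp⟩ fun _ hs b _ => hs.bfStepA b

lemma GreedyInvariant.ask_le_sellerPayAt {st : BfStateA} (h : GreedyInvariant st)
    {p : Ask × ℝ} (hp : p ∈ st.matched) (j : ℕ) : p.1.1 ≤ sellerPayAt st j := by
  obtain ⟨q, hq⟩ : ∃ q, st.matched.getLast? = some q :=
    Option.isSome_iff_exists.mp (List.getLast?_isSome.mpr (List.ne_nil_of_mem hp))
  have hp_last : p.1.1 ≤ q.1.1 := h.ask_le_last p hp q hq
  have hp_blast : p.1.1 ≤ q.2 := hp_last.trans (h.ask_le_bid q (List.mem_of_getLast? hq))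
  unfold sellerPayAt
  simp only [hq, Option.map_some, Option.getD_some]
  split_ifs
  · split
    next amin _ hmin =>
      exact le_min (h.ask_le_unmatched p hp amin ((extractMinA_perm hmin).mem_iff.mpr
        List.mem_cons_self)) (le_max_of_le_left hp_blast)
    next => exact le_max_of_le_left hp_blast
  · exact le_max_of_le_left hp_last

lemma exists_sellerPay_eq_sellerPayAt {st : BfStateA} {p : Ask × ℝ} (hp : p ∈ st.matched) :
    ∃ j, sellerPay st p.1.2 = sellerPayAt st j := by
  obtain ⟨j, hj⟩ : ∃ j, st.matched.findIdx? (fun r => r.1.2 == p.1.2) = some j :=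
    Option.isSome_iff_exists.mp (by simpa using ⟨p.1.1, p.2, hp⟩)
  exact ⟨j, by simp only [sellerPay, hj]⟩

theorem mgreedy_individually_rational_general (asks : List Ask) (bids : List ℝ) :
    (∀ p ∈ (bfRunA asks bids).matched, p.1.1 ≤ p.2) ∧
    (∀ p ∈ (bfRunA asks bids).matched, p.1.1 ≤ sellerPay (bfRunA asks bids) p.1.2) := by
  have h := GreedyInvariant.bfRunA asks bids
  refine ⟨h.ask_le_bid, fun p hp => ?_⟩
  obtain ⟨j, hj⟩ := exists_sellerPay_eq_sellerPayAt hp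
  exact hj ▸ h.ask_le_sellerPayAt hp j

/-- `M_greedy` is individually rational: under truthful
reporting, every matched buyer pays (the value of the ask he is matched to) at
most his valuation, and every matched seller receives a payment of at least
her valuation; hence every trader's utility is nonnegative. -/
theorem mgreedy_individually_rational (asks : List Ask) (bids : List ℝ)
    (hids : (asks.map Prod.snd).Nodup)
    (ha : ∀ p ∈ asks, 0 ≤ p.1) (hb : ∀ b ∈ bids, 0 ≤ b) :
    (∀ p ∈ (bfRunA asks bids).matched, p.1.1 ≤ p.2) ∧
    (∀ p ∈ (bfRunA asks bids).matched, p.1.1 ≤ sellerPay (bfRunA asks bids) p.1.2) :=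
  mgreedy_individually_rational_general asks bids
end
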